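/- Let R = R₀ ⊕ R₁ be a Z₂-graded commutative ring. Then R is a Z₂-graded field if and only if R₀ is a field and either R₁ = 0 or R₁² ≠ 0. -/

import Mathlib

/-- A `ℤ/2ℤ`-grading on a commutative ring `R`: additive subgroups `R0`, `R1` with
`R = R0 ⊕ R1` (internal direct sum) and `Rᵢ · Rⱼ ⊆ R_{i+j}`. -/
structure Z2Grading (R : Type*) [CommRing R] where
  R0 : AddSubgroup R
  R1 : AddSubgroup R
  one_mem : (1 : R) ∈ R0
  mul_mem_00 : ∀ {a b : R}, a ∈ R0 → b ∈ R0 → a * b ∈ R0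
  mul_mem_01 : ∀ {a b : R}, a ∈ R0 → b ∈ R1 → a * b ∈ R1
  mul_mem_11 : ∀ {a b : R}, a ∈ R1 → b ∈ R1 → a * b ∈ R0
  sup_eq_top : R0 ⊔ R1 = ⊤
  inf_eq_bot : R0 ⊓ R1 = ⊥

/-- The sum `S + T` of two subsets of `R`. -/
def setSum {R : Type*} [CommRing R] (S T : Set R) : Set R :=
  {z : R | ∃ a ∈ S, ∃ b ∈ T, z = a + b}

/-- The additive subgroup of `R` generated by the pairwise products of `S` and `T`
(i.e. the product `S·T` of an ideal/submodule pair). -/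
def mulSet {R : Type*} [CommRing R] (S T : Set R) : AddSubgroup R :=
  AddSubgroup.closure {x : R | ∃ a ∈ S, ∃ b ∈ T, x = a * b}

namespace Z2Grading

variable {R : Type*} [CommRing R] (G : Z2Grading R)

/-- The set of homogeneous elements of `R`, namely `R₀ ∪ R₁`. -/
def homogeneous : Set R := ↑G.R0 ∪ ↑G.R1

/-- `R₁²`, the ideal of `R₀` generated by the products of two elements of `R₁`. -/
def sq : AddSubgroup R := mulSet (↑G.R1) (↑G.R1)

/-- `R₁³ = R₁² · R₁`, an `R₀`-submodule of `R₁`. -/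
def cube : AddSubgroup R := mulSet (↑G.sq) (↑G.R1)

/-- `I` is an ideal of the subring `R₀` (viewed inside `R`). -/
def IsIdeal0 (I : AddSubgroup R) : Prop :=
  (I : Set R) ⊆ ↑G.R0 ∧ ∀ a ∈ G.R0, ∀ x ∈ I, a * x ∈ I

/-- `N` is an `R₀`-submodule of `R₁` (viewed inside `R`). -/
def IsSubmodule1 (N : AddSubgroup R) : Prop :=
  (N : Set R) ⊆ ↑G.R1 ∧ ∀ a ∈ G.R0, ∀ x ∈ N, a * x ∈ N

/-- The residual `(N :_{R₀} R₁) = {a ∈ R₀ : a·R₁ ⊆ N}`. -/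
def residual (N : AddSubgroup R) : AddSubgroup R where
  carrier := {a : R | a ∈ G.R0 ∧ ∀ r ∈ G.R1, a * r ∈ N}
  zero_mem' := ⟨G.R0.zero_mem, fun r _ => by simpa using N.zero_mem⟩
  add_mem' := by
    rintro a b ⟨ha0, ha⟩ ⟨hb0, hb⟩
    exact ⟨G.R0.add_mem ha0 hb0, fun r hr => by
      rw [add_mul]; exact N.add_mem (ha r hr) (hb r hr)⟩
  neg_mem' := by
    rintro a ⟨ha0, ha⟩
    exact ⟨G.R0.neg_mem ha0, fun r hr => by
      rw [neg_mul]; exact N.neg_mem (ha r hr)⟩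

/-- `J` is a `ℤ₂`-graded ideal of `R`: the homogeneous components of each of its
elements again belong to `J`, i.e. `J = (J ∩ R₀) ⊕ (J ∩ R₁)`. -/
def IsGradedIdeal (J : Ideal R) : Prop :=
  ∀ x ∈ J, ∃ a b : R, a ∈ G.R0 ∧ b ∈ G.R1 ∧ a ∈ J ∧ b ∈ J ∧ x = a + b

/-- `J` is a `ℤ₂`-graded prime ideal of `R`. -/
def IsGradedPrime (J : Ideal R) : Prop :=
  G.IsGradedIdeal J ∧ J ≠ ⊤ ∧
    ∀ r ∈ G.homogeneous, ∀ s ∈ G.homogeneous, r * s ∈ J → r ∈ J ∨ s ∈ J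

/-- `J` is a `ℤ₂`-graded maximal ideal of `R`. -/
def IsGradedMaximal (J : Ideal R) : Prop :=
  G.IsGradedIdeal J ∧ J ≠ ⊤ ∧
    ∀ J' : Ideal R, G.IsGradedIdeal J' → J ≤ J' → J' = J ∨ J' = ⊤

/-- `p` is a prime ideal of the subring `R₀`. -/
def IsPrime0 (p : AddSubgroup R) : Prop :=
  G.IsIdeal0 p ∧ (p : Set R) ≠ ↑G.R0 ∧
    ∀ a ∈ G.R0, ∀ b ∈ G.R0, a * b ∈ p → a ∈ p ∨ b ∈ p

/-- `p` is a maximal ideal of the subring `R₀`. -/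
def IsMaximal0 (p : AddSubgroup R) : Prop :=
  G.IsIdeal0 p ∧ (p : Set R) ≠ ↑G.R0 ∧
    ∀ I : AddSubgroup R, G.IsIdeal0 I → p ≤ I → (I : Set R) = ↑p ∨ (I : Set R) = ↑G.R0

/-- `N` is a prime `R₀`-submodule of `R₁`. -/
def IsPrimeSubmodule1 (N : AddSubgroup R) : Prop :=
  G.IsSubmodule1 N ∧ (N : Set R) ≠ ↑G.R1 ∧
    ∀ a ∈ G.R0, ∀ m ∈ G.R1, a * m ∈ N → a ∈ G.residual N ∨ m ∈ N

/-- `N` is a maximal (proper) `R₀`-submodule of `R₁`. -/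
def IsMaximalSubmodule1 (N : AddSubgroup R) : Prop :=
  G.IsSubmodule1 N ∧ (N : Set R) ≠ ↑G.R1 ∧
    ∀ N' : AddSubgroup R, G.IsSubmodule1 N' → N ≤ N' →
      (N' : Set R) = ↑N ∨ (N' : Set R) = ↑G.R1

/-- `R` is a `ℤ₂`-graded integral domain. -/
def IsGradedDomain : Prop :=
  (1 : R) ≠ 0 ∧
    ∀ r ∈ G.homogeneous, ∀ s ∈ G.homogeneous, r * s = 0 → r = 0 ∨ s = 0

/-- `R` is a `ℤ₂`-graded field. -/
def IsGradedField : Prop :=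
  (1 : R) ≠ 0 ∧ ∀ r ∈ G.homogeneous, r ≠ 0 → IsUnit r

/-- `R₀` as a subring of `R`. -/
def toSubring : Subring R where
  carrier := ↑G.R0
  one_mem' := G.one_mem
  mul_mem' := fun ha hb => G.mul_mem_00 ha hb
  zero_mem' := G.R0.zero_mem
  add_mem' := fun ha hb => G.R0.add_mem ha hb
  neg_mem' := fun ha => G.R0.neg_mem ha

/-- The Zariski topology on the homogeneous spectrum `Z₂Spec R`: closed sets are the
`V(I) = {P : I ⊆ P}` for `ℤ₂`-graded ideals `I`. -/
def gradedZariski : TopologicalSpace {Q : Ideal R // G.IsGradedPrime Q} :=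
  TopologicalSpace.generateFrom
    {U : Set {Q : Ideal R // G.IsGradedPrime Q} |
      ∃ I : Ideal R, G.IsGradedIdeal I ∧ U = {P | ¬ I ≤ P.1}}

end Z2Grading

/-!
A homogeneous unit has a homogeneous inverse of the same degree, since the two components of
`r * x = 1` can be compared separately. Hence a nonzero `r ∈ R₁` in a graded field gives
`1 = r * s ∈ R₁²`. Conversely, if `s * t ≠ 0` for some `s, t ∈ R₁` and `R₀` is a field, then `s`
is a unit, so `r ↦ r * s` sends every nonzero `r ∈ R₁` to an invertible element of `R₀`.
-/

namespace Z2Grading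

variable {R : Type*} [CommRing R] {G : Z2Grading R}

theorem exists_add_eq (G : Z2Grading R) (x : R) : ∃ a ∈ G.R0, ∃ b ∈ G.R1, a + b = x :=
  AddSubgroup.mem_sup.mp (G.sup_eq_top ▸ AddSubgroup.mem_top x)

theorem eq_zero_of_mem_R0_of_mem_R1 {x : R} (h0 : x ∈ G.R0) (h1 : x ∈ G.R1) : x = 0 := by
  have hx : x ∈ G.R0 ⊓ G.R1 := ⟨h0, h1⟩
  rwa [G.inf_eq_bot] at hx

theorem eq_zero_of_add_mem_R0 {a b : R} (ha : a ∈ G.R0) (hb : b ∈ G.R1) (hab : a + b ∈ G.R0) :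
    b = 0 :=
  eq_zero_of_mem_R0_of_mem_R1 (by simpa using G.R0.sub_mem hab ha) hb

theorem exists_mem_R0_mul_eq_one_of_isUnit {a : R} (ha : a ∈ G.R0) (hu : IsUnit a) :
    ∃ b ∈ G.R0, a * b = 1 := by
  obtain ⟨x, hx⟩ := hu.exists_right_inv
  obtain ⟨x0, hx0, x1, hx1, rfl⟩ := G.exists_add_eq x
  have hsum : a * x0 + a * x1 = 1 := by rw [← mul_add, hx]
  have hx1_zero : a * x1 = 0 :=
    eq_zero_of_add_mem_R0 (G.mul_mem_00 ha hx0) (G.mul_mem_01 ha hx1) (hsum ▸ G.one_mem)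
  exact ⟨x0, hx0, by rwa [hx1_zero, add_zero] at hsum⟩

theorem exists_mem_R1_mul_eq_one_of_isUnit {r : R} (hr : r ∈ G.R1) (hu : IsUnit r) :
    ∃ s ∈ G.R1, r * s = 1 := by
  obtain ⟨x, hx⟩ := hu.exists_right_inv
  obtain ⟨x0, hx0, x1, hx1, rfl⟩ := G.exists_add_eq x
  have hsum : r * x1 + r * x0 = 1 := by rw [← mul_add, add_comm, hx]
  have hx0_zero : r * x0 = 0 :=
    eq_zero_of_add_mem_R0 (G.mul_mem_11 hr hx1) (mul_comm x0 r ▸ G.mul_mem_01 hx0 hr)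
      (hsum ▸ G.one_mem)
  exact ⟨x1, hx1, by rwa [hx0_zero, add_zero] at hsum⟩

theorem sq_eq_bot_iff : G.sq = ⊥ ↔ ∀ s ∈ G.R1, ∀ t ∈ G.R1, s * t = 0 := by
  refine ⟨fun h s hs t ht => ?_, fun h => eq_bot_iff.mpr ((AddSubgroup.closure_le ⊥).mpr ?_)⟩
  · have hst : s * t ∈ G.sq := AddSubgroup.subset_closure ⟨s, hs, t, ht, rfl⟩
    rwa [h] at hst
  · rintro _ ⟨s, hs, t, ht, rfl⟩
    exact h s hs t ht

theorem sq_ne_bot_of_isUnit (h1 : (1 : R) ≠ 0) {r : R} (hr : r ∈ G.R1) (hu : IsUnit r) :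
    G.sq ≠ ⊥ := fun hsq => by
  obtain ⟨s, hs, hrs⟩ := exists_mem_R1_mul_eq_one_of_isUnit hr hu
  exact h1 (hrs ▸ sq_eq_bot_iff.mp hsq r hr s hs)

theorem isUnit_of_mem_R1 (hu0 : ∀ a ∈ G.R0, a ≠ 0 → IsUnit a) {s t r : R} (hs : s ∈ G.R1)
    (ht : t ∈ G.R1) (hst : s * t ≠ 0) (hr : r ∈ G.R1) (hr0 : r ≠ 0) : IsUnit r := by
  have hs_unit : IsUnit s := isUnit_of_mul_isUnit_left (hu0 _ (G.mul_mem_11 hs ht) hst)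
  have hrs : IsUnit (r * s) := hu0 _ (G.mul_mem_11 hr hs) (hs_unit.mul_left_eq_zero.not.mpr hr0)
  exact isUnit_of_mul_isUnit_left hrs

end Z2Grading

open Z2Grading in
/-- `R` is a `ℤ₂`-graded field iff `R₀` is a field and either `R₁ = 0` or
`R₁² ≠ 0`. -/
theorem graded_field_iff {R : Type*} [CommRing R] (G : Z2Grading R) :
    G.IsGradedField ↔
      (((1 : R) ≠ 0 ∧ ∀ a ∈ G.R0, a ≠ 0 → ∃ b ∈ G.R0, a * b = 1) ∧
        ((G.R1 : Set R) = {0} ∨ G.sq ≠ (⊥ : AddSubgroup R))) := by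
  constructor
  · rintro ⟨h1, hu⟩
    refine ⟨⟨h1, fun a ha ha0 => exists_mem_R0_mul_eq_one_of_isUnit ha (hu a (.inl ha) ha0)⟩, ?_⟩
    by_cases hR1 : ∃ r ∈ G.R1, r ≠ 0
    · obtain ⟨r, hr, hr0⟩ := hR1
      exact .inr (sq_ne_bot_of_isUnit h1 hr (hu r (.inr hr) hr0))
    · push Not at hR1
      exact .inl (Set.eq_singleton_iff_unique_mem.mpr ⟨G.R1.zero_mem, hR1⟩)
  · rintro ⟨⟨h1, hinv⟩, hR1⟩
    have hu0 : ∀ a ∈ G.R0, a ≠ 0 → IsUnit a := fun a ha ha0 =>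
      let ⟨b, _, hab⟩ := hinv a ha ha0
      .of_mul_eq_one b hab
    refine ⟨h1, ?_⟩
    rintro r (hr | hr) hr0
    · exact hu0 r hr hr0
    · have hsq : G.sq ≠ ⊥ := hR1.resolve_left fun h => hr0 (by simpa [h] using hr)
      obtain ⟨s, hs, t, ht, hst⟩ : ∃ s ∈ G.R1, ∃ t ∈ G.R1, s * t ≠ 0 := by
        simpa using mt sq_eq_bot_iff.mpr hsq
      exact isUnit_of_mem_R1 hu0 hs ht hst hr hr0
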